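/- Let ρ, α, β ∈ ℝ, γ > 0, o₂ > 0; set K = K_{o₂}, L = L_{o₂}, ‖K‖ = (∫₀¹∫₀ˣ K² dy dx)^{1/2}, ‖L‖ = (∫₀¹∫₀ˣ L² dy dx)^{1/2}, and ‖K_x(1,·)‖ = (∫₀¹ (∂ₓK(1,y))² dy)^{1/2}. Suppose ẽʷ, eᵛ : [0,1] × [0,∞) → ℝ are a classical solution (continuous; twice continuously differentiable in x with jointly continuous spatial derivatives; ẽʷ continuously differentiable in t with ẽʷ_t jointly continuous) of: ẽʷ_t = ẽʷ_xx − (o₂ + ρ)ẽʷ + αeᵛ − α∫₀ˣ K(x,y)eᵛ(y,t)dy; 0 = eᵛ_xx − γeᵛ + βẽʷ + β∫₀ˣ L(x,y)ẽʷ(y,t)dy; ẽʷ_x(0,t) = 0; ẽʷ_x(1,t) = −∫₀¹ ∂ₓK(1,y)·[ẽʷ(y,t) + ∫₀ʸ L(y,z)ẽʷ(z,t)dz] dy; eᵛ_x(0,t) = eᵛ_x(1,t) = 0. If o₂ + ρ > (|α||β|/γ)·(1 + ‖K‖)·(1 + ‖L‖) + ((1 + ‖L‖)²·‖K_x(1,·)‖²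 + 2)/2, then with o₃ = (o₂ + ρ) − (|α||β|/γ)(1 + ‖K‖)(1 + ‖L‖) − ((1 + ‖L‖)²‖K_x(1,·)‖² + 2)/2, for all t ≥ 0: ∫₀¹ ẽʷ(x,t)² dx ≤ e^{−2o₃t}·∫₀¹ ẽʷ(x,0)² dx. -/

import Mathlib

/-- The backstepping kernel `K_c`. -/
noncomputable def Kker (c x y : ℝ) : ℝ :=
  -(c / 2) * x * ∑' m : ℕ, (c * (x ^ 2 - y ^ 2) / 4) ^ m /
    ((Nat.factorial m : ℝ) * (Nat.factorial (m + 1) : ℝ))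

/-- The inverse backstepping kernel `L_c`. -/
noncomputable def Lker (c x y : ℝ) : ℝ :=
  -(c / 2) * x * ∑' m : ℕ, (-1 : ℝ) ^ m * (c * (x ^ 2 - y ^ 2) / 4) ^ m /
    ((Nat.factorial m : ℝ) * (Nat.factorial (m + 1) : ℝ))

/-- L² norm of a kernel over the triangle {0 ≤ y ≤ x ≤ 1}. -/
noncomputable def kerNorm (f : ℝ → ℝ → ℝ) : ℝ :=
  Real.sqrt (∫ x in (0:ℝ)..1, ∫ y in (0:ℝ)..x, (f x y) ^ 2)

/-- L² norm of `y ↦ ∂ₓK_c(1,y)` on `[0,1]`. -/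
noncomputable def kerXNorm (c : ℝ) : ℝ :=
  Real.sqrt (∫ y in (0:ℝ)..1, (deriv (fun ξ => Kker c ξ y) 1) ^ 2)

/-!
The energy `V(t) = ∫₀¹ ẽʷ(x,t)² dx` satisfies `V' ≤ -2 o₃ V`, and Grönwall gives the decay.
After integration by parts, `V'/2 = ẽʷ(1)ẽʷₓ(1) - ‖ẽʷₓ‖² - (o₂+ρ)‖ẽʷ‖² + α⟨ẽʷ, eᵛ - K eᵛ⟩`.
The boundary product is split by Young's inequality into `ẽʷ(1)²/2`, which Agmon's inequality
`ẽʷ(1)² ≤ 2‖ẽʷ‖² + ‖ẽʷₓ‖²` absorbs into `-‖ẽʷₓ‖²`, and `ẽʷₓ(1)²/2`, bounded by Cauchy–Schwarz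
through the boundary condition. The coupling term is controlled by the elliptic equation:
testing it against `eᵛ` and using the Neumann conditions gives `γ‖eᵛ‖ ≤ |β|(1 + ‖L‖)‖ẽʷ‖`.
All Volterra operators are bounded on `L²(0,1)` by the `L²` norms of their kernels.
-/

open scoped Nat
open Real intervalIntegral FormalMultilinearSeries

section L2

variable {a b : ℝ} {f g : ℝ → ℝ}

theorem integral_sq_nonneg (hab : a ≤ b) : 0 ≤ ∫ x in a..b, f x ^ 2 :=
  integral_nonneg hab fun _ _ => sq_nonneg _

theorem integral_add_const_mul_sq (hf : Continuous f) (hg : Continuous g) (s : ℝ) :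
    ∫ x in a..b, (f x + s * g x) ^ 2 =
      (∫ x in a..b, f x ^ 2) + 2 * s * (∫ x in a..b, f x * g x) + s ^ 2 * ∫ x in a..b, g x ^ 2 := by
  have hfg : Continuous fun x => f x * g x := hf.mul hg
  rw [← integral_const_mul, ← integral_const_mul, ← integral_add, ← integral_add]
  · exact integral_congr fun x _ => by ring
  all_goals apply Continuous.intervalIntegrable; fun_prop

theorem sq_integral_mul_le (hf : Continuous f) (hg : Continuous g) (hab : a ≤ b) :
    (∫ x in a..b, f x * g x) ^ 2 ≤ (∫ x in a..b, f x ^ 2) * ∫ x in a..b, g x ^ 2 := by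
  have hquad : ∀ s : ℝ, 0 ≤ (∫ x in a..b, g x ^ 2) * (s * s) +
      2 * (∫ x in a..b, f x * g x) * s + ∫ x in a..b, f x ^ 2 := fun s => by
    have := integral_add_const_mul_sq (a := a) (b := b) hf hg s
    nlinarith [integral_sq_nonneg (f := fun x => f x + s * g x) hab]
  have := discrim_le_zero hquad
  rw [discrim] at this
  nlinarith

theorem abs_integral_mul_le (hf : Continuous f) (hg : Continuous g) (hab : a ≤ b) :
    |∫ x in a..b, f x * g x| ≤ √(∫ x in a..b, f x ^ 2) * √(∫ x in a..b, g x ^ 2) := by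
  rw [← sqrt_mul (integral_sq_nonneg hab), ← sqrt_sq_eq_abs]
  exact sqrt_le_sqrt (sq_integral_mul_le hf hg hab)

theorem sqrt_integral_add_sq_le (hf : Continuous f) (hg : Continuous g) (hab : a ≤ b) :
    √(∫ x in a..b, (f x + g x) ^ 2) ≤ √(∫ x in a..b, f x ^ 2) + √(∫ x in a..b, g x ^ 2) := by
  have hexp := integral_add_const_mul_sq (a := a) (b := b) hf hg 1
  simp only [one_mul, one_pow] at hexp
  rw [sqrt_le_left (by positivity), hexp]
  have hA := sq_sqrt (integral_sq_nonneg (f := f) hab)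
  have hC := sq_sqrt (integral_sq_nonneg (f := g) hab)
  nlinarith [(le_abs_self _).trans (abs_integral_mul_le hf hg hab)]

end L2

section Volterra

variable {k : ℝ → ℝ → ℝ} {f ψ : ℝ → ℝ}

theorem kerNorm_nonneg (k : ℝ → ℝ → ℝ) : 0 ≤ kerNorm k :=
  sqrt_nonneg _

theorem kerNorm_neg (k : ℝ → ℝ → ℝ) : kerNorm (fun x y => -k x y) = kerNorm k := by
  simp only [kerNorm, neg_sq]

theorem continuous_volterra (hk : Continuous (Function.uncurry k)) (hf : Continuous f) :
    Continuous fun x => ∫ y in (0:ℝ)..x, k x y * f y :=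
  continuous_parametric_intervalIntegral_of_continuous (hk.mul (hf.comp continuous_snd))
    continuous_id

theorem sqrt_integral_volterra_sq_le (hk : Continuous (Function.uncurry k)) (hf : Continuous f) :
    √(∫ x in (0:ℝ)..1, (∫ y in (0:ℝ)..x, k x y * f y) ^ 2) ≤
      kerNorm k * √(∫ y in (0:ℝ)..1, f y ^ 2) := by
  have hpt : ∀ x ∈ Set.Icc (0:ℝ) 1, (∫ y in (0:ℝ)..x, k x y * f y) ^ 2 ≤
      (∫ y in (0:ℝ)..x, k x y ^ 2) * ∫ y in (0:ℝ)..1, f y ^ 2 := fun x hx => by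
    refine (sq_integral_mul_le (hk.comp (Continuous.prodMk_right x)) hf hx.1).trans ?_
    refine mul_le_mul_of_nonneg_left ?_ (integral_sq_nonneg hx.1)
    exact integral_mono_interval le_rfl hx.1 hx.2
      (Filter.Eventually.of_forall fun _ => sq_nonneg _) ((hf.pow 2).intervalIntegrable 0 1)
  have hint : ∫ x in (0:ℝ)..1, (∫ y in (0:ℝ)..x, k x y * f y) ^ 2 ≤
      ∫ x in (0:ℝ)..1, (∫ y in (0:ℝ)..x, k x y ^ 2) * ∫ y in (0:ℝ)..1, f y ^ 2 :=
    integral_mono_on zero_le_one (((continuous_volterra hk hf).pow 2).intervalIntegrable 0 1)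
      (((continuous_parametric_intervalIntegral_of_continuous (f := fun x y => k x y ^ 2)
        (by exact hk.pow 2) continuous_id).mul continuous_const).intervalIntegrable 0 1) hpt
  rw [integral_mul_const] at hint
  rw [kerNorm, ← sqrt_mul (integral_nonneg zero_le_one fun x hx => integral_sq_nonneg hx.1)]
  exact sqrt_le_sqrt hint

theorem abs_integral_mul_add_volterra_le (hψ : Continuous ψ)
    (hk : Continuous (Function.uncurry k)) (hf : Continuous f) :
    |∫ x in (0:ℝ)..1, ψ x * (f x + ∫ y in (0:ℝ)..x, k x y * f y)| ≤
      √(∫ x in (0:ℝ)..1, ψ x ^ 2) * ((1 + kerNorm k) * √(∫ x in (0:ℝ)..1, f x ^ 2)) := by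
  have hV := continuous_volterra hk hf
  refine (abs_integral_mul_le (g := fun x => f x + ∫ y in (0:ℝ)..x, k x y * f y) hψ (hf.add hV)
    zero_le_one).trans (mul_le_mul_of_nonneg_left ?_ (sqrt_nonneg _))
  linarith [sqrt_integral_add_sq_le hf hV zero_le_one, sqrt_integral_volterra_sq_le hk hf]

end Volterra

section Calculus

variable {f g : ℝ → ℝ}

theorem integral_mul_deriv_deriv (hf : ContDiff ℝ 2 f) (a b : ℝ) :
    ∫ x in a..b, f x * deriv (deriv f) x =
      f b * deriv f b - f a * deriv f a - ∫ x in a..b, deriv f x ^ 2 := by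
  have hf' : ContDiff ℝ 1 (deriv f) := hf.iterate_deriv' 1 1
  have hibp := integral_deriv_mul_eq_sub (a := a) (b := b)
    (fun x _ => (hf.differentiable two_ne_zero x).hasDerivAt)
    (fun x _ => (hf'.differentiable one_ne_zero x).hasDerivAt)
    (hf'.continuous.intervalIntegrable a b) ((hf'.continuous_deriv le_rfl).intervalIntegrable a b)
  rw [integral_add (f := fun x => deriv f x * deriv f x) (g := fun x => f x * deriv (deriv f) x)
    ((hf'.continuous.mul hf'.continuous).intervalIntegrable a b)
    ((hf.continuous.mul (hf'.continuous_deriv le_rfl)).intervalIntegrable a b)] at hibp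
  simp only [← sq] at hibp
  linarith

/-- Agmon's inequality on `[0, 1]`. -/
theorem sq_le_two_mul_integral_sq_add_integral_deriv_sq (hf : ContDiff ℝ 1 f) :
    f 1 ^ 2 ≤ 2 * (∫ x in (0:ℝ)..1, f x ^ 2) + ∫ x in (0:ℝ)..1, deriv f x ^ 2 := by
  have hf' : Continuous (deriv f) := hf.continuous_deriv le_rfl
  -- integrate `(x f(x)²)' = f² + 2 x f f'` over `[0, 1]`
  have hftc := integral_deriv_mul_eq_sub (a := 0) (b := 1) (u := fun x => x) (u' := fun _ => 1)
    (v := fun x => f x ^ 2) (v' := fun x => 2 * f x * deriv f x)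
    (fun x _ => hasDerivAt_id' x)
    (fun x _ => ((hf.differentiable one_ne_zero x).hasDerivAt.pow 2).congr_deriv (by ring))
    intervalIntegrable_const (by apply Continuous.intervalIntegrable; fun_prop)
  calc f 1 ^ 2 = ∫ x in (0:ℝ)..1, (1 * f x ^ 2 + x * (2 * f x * deriv f x)) := by
        rw [hftc]; ring
    _ ≤ ∫ x in (0:ℝ)..1, (2 * f x ^ 2 + deriv f x ^ 2) := by
        refine integral_mono_on zero_le_one (by apply Continuous.intervalIntegrable; fun_prop)
          (by apply Continuous.intervalIntegrable; fun_prop) fun x hx => ?_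
        have hx2 : x ^ 2 * f x ^ 2 ≤ f x ^ 2 :=
          mul_le_of_le_one_left (sq_nonneg _) (pow_le_one₀ hx.1 hx.2)
        nlinarith [sq_nonneg (x * f x - deriv f x)]
    _ = 2 * (∫ x in (0:ℝ)..1, f x ^ 2) + ∫ x in (0:ℝ)..1, deriv f x ^ 2 := by
        rw [integral_add (by apply Continuous.intervalIntegrable; fun_prop)
          (by apply Continuous.intervalIntegrable; fun_prop), integral_const_mul]

theorem two_mul_integral_mul_deriv_deriv_le (hf : ContDiff ℝ 2 f) (h0 : deriv f 0 = 0) {M : ℝ}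
    (h1 : |deriv f 1| ≤ M * √(∫ x in (0:ℝ)..1, f x ^ 2)) :
    2 * ∫ x in (0:ℝ)..1, f x * deriv (deriv f) x ≤ (M ^ 2 + 2) * ∫ x in (0:ℝ)..1, f x ^ 2 := by
  have hA := integral_sq_nonneg (f := f) zero_le_one
  have hB := integral_sq_nonneg (f := deriv f) zero_le_one
  have hagmon := sq_le_two_mul_integral_sq_add_integral_deriv_sq (hf.of_le one_le_two)
  have htrace : deriv f 1 ^ 2 ≤ M ^ 2 * ∫ x in (0:ℝ)..1, f x ^ 2 := by
    rw [← sq_abs, ← sq_sqrt hA, ← mul_pow]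
    exact pow_le_pow_left₀ (abs_nonneg _) h1 2
  rw [integral_mul_deriv_deriv hf, h0]
  nlinarith [sq_nonneg (f 1 - deriv f 1)]

theorem mul_integral_sq_le_integral_mul_of_neumann {γ : ℝ} (hf : ContDiff ℝ 2 f)
    (h0 : deriv f 0 = 0) (h1 : deriv f 1 = 0) (hg : Continuous g)
    (heq : ∀ x ∈ Set.Icc (0:ℝ) 1, deriv (deriv f) x = γ * f x - g x) :
    γ * ∫ x in (0:ℝ)..1, f x ^ 2 ≤ ∫ x in (0:ℝ)..1, f x * g x := by
  have hibp := integral_mul_deriv_deriv hf 0 1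
  rw [h0, h1, integral_congr fun x hx => by
    rw [heq x (by rwa [Set.uIcc_of_le zero_le_one] at hx)]] at hibp
  have hsplit : ∫ x in (0:ℝ)..1, f x * (γ * f x - g x) =
      γ * (∫ x in (0:ℝ)..1, f x ^ 2) - ∫ x in (0:ℝ)..1, f x * g x := by
    rw [← integral_const_mul, ← integral_sub]
    · exact integral_congr fun x _ => by ring
    all_goals apply Continuous.intervalIntegrable; fun_prop
  nlinarith [integral_sq_nonneg (f := deriv f) zero_le_one]

end Calculus

theorem hasDerivAt_integral_of_continuous {F F' : ℝ → ℝ → ℝ} {a b t₀ : ℝ}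
    (hF : Continuous (Function.uncurry F)) (hF' : Continuous (Function.uncurry F'))
    (hd : ∀ x t, HasDerivAt (F x) (F' x t) t) :
    HasDerivAt (fun t => ∫ x in a..b, F x t) (∫ x in a..b, F' x t₀) t₀ := by
  obtain ⟨C, hC⟩ := (isCompact_uIcc.prod (isCompact_closedBall t₀ 1)).exists_bound_of_continuousOn
    hF'.continuousOn
  have hFt : ∀ t, Continuous (F · t) := fun t => hF.comp (continuous_id.prodMk continuous_const)
  refine (hasDerivAt_integral_of_dominated_loc_of_deriv_le (bound := fun _ => C)
    (Metric.closedBall_mem_nhds t₀ one_pos)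
    (Filter.Eventually.of_forall fun t => (hFt t).aestronglyMeasurable)
    ((hFt t₀).intervalIntegrable a b)
    (hF'.comp (continuous_id.prodMk continuous_const)).aestronglyMeasurable
    (Filter.Eventually.of_forall fun x hx t ht => hC (x, t) ⟨Set.uIoc_subset_uIcc hx, ht⟩)
    intervalIntegrable_const (Filter.Eventually.of_forall fun x _ t _ => hd x t)).2

theorem le_exp_mul_mul_of_hasDerivAt_le {V V' : ℝ → ℝ} {K t : ℝ}
    (hV : ∀ s, 0 ≤ s → HasDerivAt V (V' s) s) (hle : ∀ s, 0 ≤ s → V' s ≤ K * V s) (ht : 0 ≤ t) :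
    V t ≤ exp (K * t) * V 0 := by
  have hG := le_gronwallBound_of_liminf_deriv_right_le (ε := 0)
    (fun s hs => (hV s hs.1).continuousAt.continuousWithinAt)
    (fun s hs r hr => (hV s hs.1).hasDerivWithinAt.liminf_right_slope_le hr)
    le_rfl (fun s hs => by rw [add_zero]; exact hle s hs.1) t ⟨ht, le_rfl⟩
  rwa [gronwallBound_ε0, sub_zero, mul_comm] at hG

section Kernels

/-- The series `∑ uᵐ / (m! (m+1)!) = I₁(2√u) / √u`. -/
noncomputable def kernelSeries : ℝ → ℝ :=
  ofScalarsSum (E := ℝ) fun m => ((m ! : ℝ) * ((m + 1)! : ℝ))⁻¹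

theorem kernelSeries_apply (u : ℝ) :
    kernelSeries u = ∑' m : ℕ, u ^ m / ((m ! : ℝ) * ((m + 1)! : ℝ)) := by
  simp only [kernelSeries, ofScalars_sum_eq, smul_eq_mul, div_eq_inv_mul]

theorem radius_ofScalars_kernelSeries :
    (ofScalars ℝ fun m => ((m ! : ℝ) * ((m + 1)! : ℝ))⁻¹).radius = ⊤ := by
  refine radius_eq_top_of_summable_norm _ fun r => ?_
  refine (Real.summable_pow_div_factorial r).of_nonneg_of_le (fun m => by positivity) fun m => ?_
  rw [ofScalars_norm, norm_inv, Real.norm_of_nonneg (by positivity), inv_mul_eq_div]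
  gcongr
  exact le_mul_of_one_le_right (by positivity) (by exact_mod_cast (m + 1).factorial_pos)

theorem contDiff_kernelSeries {n : WithTop ℕ∞} : ContDiff ℝ n kernelSeries := by
  refine AnalyticOnNhd.contDiff fun u _ => ?_
  have h := (ofScalars ℝ fun m => ((m ! : ℝ) * ((m + 1)! : ℝ))⁻¹).hasFPowerSeriesOnBall
    (by rw [radius_ofScalars_kernelSeries]; simp)
  rw [radius_ofScalars_kernelSeries] at h
  exact h.analyticAt_of_mem (by simp)

theorem Kker_eq_kernelSeries (c x y : ℝ) :
    Kker c x y = -(c / 2) * x * kernelSeries (c * (x ^ 2 - y ^ 2) / 4) := by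
  rw [kernelSeries_apply]; rfl

theorem Lker_eq_kernelSeries (c x y : ℝ) :
    Lker c x y = -(c / 2) * x * kernelSeries (-(c * (x ^ 2 - y ^ 2) / 4)) := by
  rw [kernelSeries_apply]
  exact congrArg _ (tsum_congr fun m => by rw [neg_pow (c * (x ^ 2 - y ^ 2) / 4)])

theorem continuous_Kker (c : ℝ) : Continuous fun p : ℝ × ℝ => Kker c p.1 p.2 := by
  have := contDiff_kernelSeries.continuous (n := 0)
  simp only [Kker_eq_kernelSeries]
  fun_prop

theorem continuous_Lker (c : ℝ) : Continuous fun p : ℝ × ℝ => Lker c p.1 p.2 := by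
  have := contDiff_kernelSeries.continuous (n := 0)
  simp only [Lker_eq_kernelSeries]
  fun_prop

theorem hasDerivAt_Kker (c x y : ℝ) :
    HasDerivAt (fun ξ => Kker c ξ y)
      (-(c / 2) * kernelSeries (c * (x ^ 2 - y ^ 2) / 4) -
        (c / 2) * x * (deriv kernelSeries (c * (x ^ 2 - y ^ 2) / 4) * (c * x / 2))) x := by
  have hu : HasDerivAt (fun ξ : ℝ => c * (ξ ^ 2 - y ^ 2) / 4) (c * x / 2) x :=
    ((((hasDerivAt_pow 2 x).sub_const (y ^ 2)).const_mul c).div_const 4).congr_deriv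
      (by push_cast; ring)
  have hS := (contDiff_kernelSeries (n := 1).differentiable one_ne_zero _).hasDerivAt.comp x hu
  simp only [Kker_eq_kernelSeries]
  exact (((hasDerivAt_id' x).const_mul (-(c / 2))).mul hS).congr_deriv
    (by simp only [Function.comp_apply]; ring)

theorem continuous_deriv_Kker_one (c : ℝ) :
    Continuous fun y => deriv (fun ξ => Kker c ξ y) 1 := by
  simp only [(hasDerivAt_Kker c 1 _).deriv]
  have := contDiff_kernelSeries.continuous (n := 0)
  have := contDiff_kernelSeries.continuous_deriv (n := 1) le_rfl
  fun_prop

end Kernels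

theorem mul_sqrt_integral_sq_le_of_neumann_volterra {β γ : ℝ} {l : ℝ → ℝ → ℝ} {v w : ℝ → ℝ}
    (hl : Continuous (Function.uncurry l)) (hv : ContDiff ℝ 2 v) (hw : Continuous w)
    (hell : ∀ x ∈ Set.Icc (0:ℝ) 1, (0:ℝ) =
      deriv (deriv v) x - γ * v x + β * w x + β * ∫ y in (0:ℝ)..x, l x y * w y)
    (hbv0 : deriv v 0 = 0) (hbv1 : deriv v 1 = 0) :
    γ * √(∫ x in (0:ℝ)..1, v x ^ 2) ≤ |β| * ((1 + kerNorm l) * √(∫ x in (0:ℝ)..1, w x ^ 2)) := by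
  set Nv := √(∫ x in (0:ℝ)..1, v x ^ 2)
  have hLw := continuous_volterra hl hw
  have hneu := mul_integral_sq_le_integral_mul_of_neumann (γ := γ) hv hbv0 hbv1
    (g := fun x => β * (w x + ∫ y in (0:ℝ)..x, l x y * w y)) (by fun_prop)
    fun x hx => by linarith [hell x hx]
  simp only [mul_left_comm _ β, integral_const_mul] at hneu
  have hquad : Nv * (γ * Nv) ≤ Nv * (|β| * ((1 + kerNorm l) * √(∫ x in (0:ℝ)..1, w x ^ 2))) :=
    calc Nv * (γ * Nv) = γ * ∫ x in (0:ℝ)..1, v x ^ 2 := by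
          rw [mul_left_comm, ← sq, sq_sqrt (integral_sq_nonneg zero_le_one)]
      _ ≤ |β| * |∫ x in (0:ℝ)..1, v x * (w x + ∫ y in (0:ℝ)..x, l x y * w y)| :=
          hneu.trans ((le_abs_self _).trans (abs_mul _ _).le)
      _ ≤ |β| * (Nv * ((1 + kerNorm l) * √(∫ x in (0:ℝ)..1, w x ^ 2))) := by
          gcongr; exact abs_integral_mul_add_volterra_le hv.continuous hl hw
      _ = Nv * (|β| * ((1 + kerNorm l) * √(∫ x in (0:ℝ)..1, w x ^ 2))) := by ring
  rcases (sqrt_nonneg _ : 0 ≤ Nv).eq_or_lt with h0 | hpos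
  · rw [show Nv = 0 from h0.symm, mul_zero]
    exact mul_nonneg (abs_nonneg β) (mul_nonneg (by linarith [kerNorm_nonneg l]) (sqrt_nonneg _))
  · exact le_of_mul_le_mul_left hquad hpos

theorem integral_two_mul_mul_le_of_target_system {μ α β γ : ℝ} (hγ : 0 < γ)
    {k l : ℝ → ℝ → ℝ} {ψ w v wt : ℝ → ℝ} (hk : Continuous (Function.uncurry k))
    (hl : Continuous (Function.uncurry l)) (hψ : Continuous ψ)
    (hw : ContDiff ℝ 2 w) (hv : ContDiff ℝ 2 v)
    (hpde : ∀ x ∈ Set.Icc (0:ℝ) 1, wt x =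
      deriv (deriv w) x - μ * w x + α * v x - α * ∫ y in (0:ℝ)..x, k x y * v y)
    (hell : ∀ x ∈ Set.Icc (0:ℝ) 1, (0:ℝ) =
      deriv (deriv v) x - γ * v x + β * w x + β * ∫ y in (0:ℝ)..x, l x y * w y)
    (hbw0 : deriv w 0 = 0)
    (hbw1 : deriv w 1 = -∫ y in (0:ℝ)..1, ψ y * (w y + ∫ z in (0:ℝ)..y, l y z * w z))
    (hbv0 : deriv v 0 = 0) (hbv1 : deriv v 1 = 0) :
    ∫ x in (0:ℝ)..1, 2 * w x * wt x ≤
      -2 * (μ - (|α| * |β| / γ) * (1 + kerNorm k) * (1 + kerNorm l) -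
        ((1 + kerNorm l) ^ 2 * √(∫ y in (0:ℝ)..1, ψ y ^ 2) ^ 2 + 2) / 2) *
      ∫ x in (0:ℝ)..1, w x ^ 2 := by
  set A := ∫ x in (0:ℝ)..1, w x ^ 2
  set Nw := √A
  set Nv := √(∫ x in (0:ℝ)..1, v x ^ 2)
  have hNw : Nw ^ 2 = A := sq_sqrt (integral_sq_nonneg zero_le_one)
  have hKv := continuous_volterra hk hv.continuous
  have hw'' : Continuous (deriv (deriv w)) := (hw.iterate_deriv' 0 2).continuous
  -- `v - K v` is written as `v + (-K) v`, so that `abs_integral_mul_add_volterra_le` applies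
  have hid : ∫ x in (0:ℝ)..1, 2 * w x * wt x = 2 * (∫ x in (0:ℝ)..1, w x * deriv (deriv w) x) -
      μ * 2 * A + 2 * α * ∫ x in (0:ℝ)..1, w x * (v x + ∫ y in (0:ℝ)..x, -k x y * v y) := by
    rw [← integral_const_mul, ← integral_const_mul, ← integral_const_mul, ← integral_sub,
      ← integral_add]
    · refine integral_congr fun x hx => ?_
      rw [hpde x (by rwa [Set.uIcc_of_le zero_le_one] at hx)]
      simp only [neg_mul, integral_neg]
      ring
    all_goals apply Continuous.intervalIntegrable; fun_prop
  have hbdy : |deriv w 1| ≤ (√(∫ y in (0:ℝ)..1, ψ y ^ 2) * (1 + kerNorm l)) * Nw := by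
    rw [hbw1, abs_neg, mul_assoc]
    exact abs_integral_mul_add_volterra_le hψ hl hw.continuous
  have hcpl := abs_integral_mul_add_volterra_le (k := fun x y => -k x y) hw.continuous
    (by exact hk.neg) hv.continuous
  rw [kerNorm_neg] at hcpl
  have hv_le := mul_sqrt_integral_sq_le_of_neumann_volterra hl hv hw.continuous hell hbv0 hbv1
  have hcoup : 2 * α * ∫ x in (0:ℝ)..1, w x * (v x + ∫ y in (0:ℝ)..x, -k x y * v y) ≤
      2 * (|α| * |β| / γ) * (1 + kerNorm k) * (1 + kerNorm l) * A := calc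
    _ ≤ 2 * |α| * (Nw * ((1 + kerNorm k) * Nv)) := by
      rw [mul_assoc, mul_assoc 2 |α|]
      exact mul_le_mul_of_nonneg_left ((le_abs_self _).trans ((abs_mul _ _).trans_le
        (mul_le_mul_of_nonneg_left hcpl (abs_nonneg α)))) zero_le_two
    _ ≤ 2 * |α| * (Nw * ((1 + kerNorm k) * (|β| * ((1 + kerNorm l) * Nw) / γ))) := by
      have := kerNorm_nonneg k
      gcongr
      rwa [le_div_iff₀ hγ, mul_comm]
    _ = _ := by rw [← hNw]; field_simp
  linarith [two_mul_integral_mul_deriv_deriv_le hw hbw0 hbdy]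

theorem single_measurement_target_decay_general (ρ α β γ o₂ : ℝ) (hγ : γ > 0)
    (tew ev : ℝ → ℝ → ℝ)
    -- regularity of the classical solution
    (htew_cont : Continuous fun p : ℝ × ℝ => tew p.1 p.2)
    (htew_x : ∀ t : ℝ, ContDiff ℝ 2 fun x => tew x t)
    (hev_x : ∀ t : ℝ, ContDiff ℝ 2 fun x => ev x t)
    (htew_t : ∀ x : ℝ, ContDiff ℝ 1 fun t => tew x t)
    (htewt_cont : Continuous fun p : ℝ × ℝ => deriv (fun t => tew p.1 t) p.2)
    -- the target observer error system
    (hpde : ∀ x ∈ Set.Icc (0:ℝ) 1, ∀ t : ℝ, 0 ≤ t →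
      deriv (fun τ => tew x τ) t =
        deriv (deriv (fun ξ => tew ξ t)) x - (o₂ + ρ) * tew x t + α * ev x t -
          α * ∫ y in (0:ℝ)..x, Kker o₂ x y * ev y t)
    (hell : ∀ x ∈ Set.Icc (0:ℝ) 1, ∀ t : ℝ, 0 ≤ t →
      (0 : ℝ) = deriv (deriv (fun ξ => ev ξ t)) x - γ * ev x t + β * tew x t +
        β * ∫ y in (0:ℝ)..x, Lker o₂ x y * tew y t)
    (hbw0 : ∀ t : ℝ, 0 ≤ t → deriv (fun ξ => tew ξ t) 0 = 0)
    (hbw1 : ∀ t : ℝ, 0 ≤ t → deriv (fun ξ => tew ξ t) 1 =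
      -∫ y in (0:ℝ)..1, deriv (fun ξ => Kker o₂ ξ y) 1 *
        (tew y t + ∫ z in (0:ℝ)..y, Lker o₂ y z * tew z t))
    (hbv0 : ∀ t : ℝ, 0 ≤ t → deriv (fun ξ => ev ξ t) 0 = 0)
    (hbv1 : ∀ t : ℝ, 0 ≤ t → deriv (fun ξ => ev ξ t) 1 = 0)
    (o₃ : ℝ)
    (ho₃ : o₃ = (o₂ + ρ) -
      (|α| * |β| / γ) * (1 + kerNorm (Kker o₂)) * (1 + kerNorm (Lker o₂)) -
        ((1 + kerNorm (Lker o₂)) ^ 2 * (kerXNorm o₂) ^ 2 + 2) / 2) :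
    ∀ t : ℝ, 0 ≤ t →
      (∫ x in (0:ℝ)..1, (tew x t) ^ 2) ≤
        Real.exp (-2 * o₃ * t) * ∫ x in (0:ℝ)..1, (tew x 0) ^ 2 := by
  intro t ht
  have htew_dt : ∀ x s, HasDerivAt (tew x ·) (deriv (tew x ·) s) s := fun x s =>
    ((htew_t x).differentiable one_ne_zero s).hasDerivAt
  refine le_exp_mul_mul_of_hasDerivAt_le (V := fun t => ∫ x in (0:ℝ)..1, tew x t ^ 2)
    (V' := fun t => ∫ x in (0:ℝ)..1, 2 * tew x t * deriv (tew x ·) t)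
    (fun s _ => ?_) (fun s hs => ?_) ht
  · exact hasDerivAt_integral_of_continuous (F := fun x t => tew x t ^ 2)
      (F' := fun x t => 2 * tew x t * deriv (tew x ·) t) (by exact htew_cont.pow 2)
      (by exact (continuous_const.mul htew_cont).mul htewt_cont)
      fun x s => ((htew_dt x s).pow 2).congr_deriv (by ring)
  · rw [ho₃]
    exact integral_two_mul_mul_le_of_target_system hγ (continuous_Kker o₂) (continuous_Lker o₂)
      (continuous_deriv_Kker_one o₂) (htew_x s) (hev_x s) (fun x hx => hpde x hx s hs)
      (fun x hx => hell x hx s hs) (hbw0 s hs) (hbw1 s hs) (hbv0 s hs) (hbv1 s hs)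

/-- Theorem 18: exponential Lyapunov decay of the target observer
error system in the single-measurement case. -/
theorem single_measurement_target_decay (ρ α β γ o₂ : ℝ) (hγ : γ > 0) (ho₂ : o₂ > 0)
    (tew ev : ℝ → ℝ → ℝ)
    -- regularity of the classical solution
    (htew_cont : Continuous fun p : ℝ × ℝ => tew p.1 p.2)
    (hev_cont : Continuous fun p : ℝ × ℝ => ev p.1 p.2)
    (htew_x : ∀ t : ℝ, ContDiff ℝ 2 fun x => tew x t)
    (hev_x : ∀ t : ℝ, ContDiff ℝ 2 fun x => ev x t)
    (htewx_cont : Continuous fun p : ℝ × ℝ => deriv (fun x => tew x p.2) p.1)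
    (htewxx_cont : Continuous fun p : ℝ × ℝ => deriv (deriv (fun x => tew x p.2)) p.1)
    (hevx_cont : Continuous fun p : ℝ × ℝ => deriv (fun x => ev x p.2) p.1)
    (hevxx_cont : Continuous fun p : ℝ × ℝ => deriv (deriv (fun x => ev x p.2)) p.1)
    (htew_t : ∀ x : ℝ, ContDiff ℝ 1 fun t => tew x t)
    (htewt_cont : Continuous fun p : ℝ × ℝ => deriv (fun t => tew p.1 t) p.2)
    -- the target observer error system
    (hpde : ∀ x ∈ Set.Icc (0:ℝ) 1, ∀ t : ℝ, 0 ≤ t →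
      deriv (fun τ => tew x τ) t =
        deriv (deriv (fun ξ => tew ξ t)) x - (o₂ + ρ) * tew x t + α * ev x t -
          α * ∫ y in (0:ℝ)..x, Kker o₂ x y * ev y t)
    (hell : ∀ x ∈ Set.Icc (0:ℝ) 1, ∀ t : ℝ, 0 ≤ t →
      (0 : ℝ) = deriv (deriv (fun ξ => ev ξ t)) x - γ * ev x t + β * tew x t +
        β * ∫ y in (0:ℝ)..x, Lker o₂ x y * tew y t)
    (hbw0 : ∀ t : ℝ, 0 ≤ t → deriv (fun ξ => tew ξ t) 0 = 0)
    (hbw1 : ∀ t : ℝ, 0 ≤ t → deriv (fun ξ => tew ξ t) 1 =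
      -∫ y in (0:ℝ)..1, deriv (fun ξ => Kker o₂ ξ y) 1 *
        (tew y t + ∫ z in (0:ℝ)..y, Lker o₂ y z * tew z t))
    (hbv0 : ∀ t : ℝ, 0 ≤ t → deriv (fun ξ => ev ξ t) 0 = 0)
    (hbv1 : ∀ t : ℝ, 0 ≤ t → deriv (fun ξ => ev ξ t) 1 = 0)
    -- the stability condition
    (hcond : o₂ + ρ >
      (|α| * |β| / γ) * (1 + kerNorm (Kker o₂)) * (1 + kerNorm (Lker o₂)) +
        ((1 + kerNorm (Lker o₂)) ^ 2 * (kerXNorm o₂) ^ 2 + 2) / 2)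
    (o₃ : ℝ)
    (ho₃ : o₃ = (o₂ + ρ) -
      (|α| * |β| / γ) * (1 + kerNorm (Kker o₂)) * (1 + kerNorm (Lker o₂)) -
        ((1 + kerNorm (Lker o₂)) ^ 2 * (kerXNorm o₂) ^ 2 + 2) / 2) :
    ∀ t : ℝ, 0 ≤ t →
      (∫ x in (0:ℝ)..1, (tew x t) ^ 2) ≤
        Real.exp (-2 * o₃ * t) * ∫ x in (0:ℝ)..1, (tew x 0) ^ 2 :=
  single_measurement_target_decay_general ρ α β γ o₂ hγ tew ev htew_cont htew_x hev_x htew_t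
    htewt_cont hpde hell hbw0 hbw1 hbv0 hbv1 o₃ ho₃
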